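/- Let y be a real number with 0 < y ≤ 1 and let v ≥ 3 be a real number. Then G(v,y) > 1, where G(v,y) := v·∫_1^{√(v/(v−2))} ((v+y²)/(v+y²x²))^{(v+1)/2} dx. -/

import Mathlib

/-!
On `[1, b]` with `b = √(v/(v-2))` the integrand is at least `3/2 - x²/2`: its base decreases in
`y²`, so it is at least `(v+1)/(v+x²) ≥ 1 - (x²-1)/(v+1)`, and Bernoulli's inequality for the
exponent `(v+1)/2 ≥ 1` gives the bound. Integrating, `G(v,y) ≥ v (b-1)(8-b-b²)/6`, and since
`v = 2b²/(b²-1)` this exceeds `1` exactly when `3(b+1) < b²(8-b-b²)`, which holds for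
`1 < b ≤ √3`.
-/

open MeasureTheory Real intervalIntegral

/-- The comparison function `G(v, y)`. -/
noncomputable def G (v y : ℝ) : ℝ :=
  v * ∫ x in (1 : ℝ)..Real.sqrt (v / (v - 2)),
    ((v + y ^ 2) / (v + y ^ 2 * x ^ 2)) ^ ((v + 1) / 2)

lemma one_sub_div_le_div_add {a s : ℝ} (ha : 0 < a) (has : 0 < a + s) :
    1 - s / a ≤ a / (a + s) := by
  rw [one_sub_div ha.ne', div_le_div_iff₀ ha has]
  nlinarith [sq_nonneg s]

lemma div_le_div_add_mul_sq {v t x : ℝ} (hv : 0 < v) (ht0 : 0 ≤ t) (ht1 : t ≤ 1)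
    (hx : 1 ≤ x ^ 2) :
    (v + 1) / (v + x ^ 2) ≤ (v + t) / (v + t * x ^ 2) := by
  rw [div_le_div_iff₀ (by positivity) (by positivity)]
  nlinarith [mul_nonneg (mul_nonneg hv.le (sub_nonneg.2 ht1)) (sub_nonneg.2 hx)]

lemma three_halves_sub_sq_le_rpow {v y x : ℝ} (hv : 1 ≤ v) (hy : y ^ 2 ≤ 1)
    (hx1 : 1 ≤ x ^ 2) (hx : x ^ 2 ≤ v + 2) :
    3 / 2 - x ^ 2 / 2 ≤ ((v + y ^ 2) / (v + y ^ 2 * x ^ 2)) ^ ((v + 1) / 2) := by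
  have hu : -1 ≤ -((x ^ 2 - 1) / (v + 1)) := by
    rw [neg_le_neg_iff, div_le_one (by linarith)]; linarith
  have hbase : 1 + -((x ^ 2 - 1) / (v + 1)) ≤ (v + y ^ 2) / (v + y ^ 2 * x ^ 2) := calc
    _ = 1 - (x ^ 2 - 1) / (v + 1) := by ring
    _ ≤ (v + 1) / (v + 1 + (x ^ 2 - 1)) := one_sub_div_le_div_add (by linarith) (by linarith)
    _ = (v + 1) / (v + x ^ 2) := by ring_nf
    _ ≤ _ := div_le_div_add_mul_sq (by linarith) (sq_nonneg y) hy hx1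
  calc 3 / 2 - x ^ 2 / 2 = 1 + (v + 1) / 2 * -((x ^ 2 - 1) / (v + 1)) := by
        field_simp; ring
    _ ≤ (1 + -((x ^ 2 - 1) / (v + 1))) ^ ((v + 1) / 2) :=
        one_add_mul_self_le_rpow_one_add hu (by linarith)
    _ ≤ _ := rpow_le_rpow (by linarith) hbase (by linarith)

lemma integral_three_halves_sub_sq (b : ℝ) :
    ∫ x in (1 : ℝ)..b, (3 / 2 - x ^ 2 / 2) = (b - 1) * (8 - b - b ^ 2) / 6 := by
  have hsq : IntervalIntegrable (fun x : ℝ => x ^ 2 / 2) volume 1 b :=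
    (continuous_pow 2).div_const 2 |>.intervalIntegrable _ _
  rw [integral_sub intervalIntegrable_const hsq, intervalIntegral.integral_const,
    intervalIntegral.integral_div, integral_pow]
  simp only [smul_eq_mul, Nat.reduceAdd, one_pow, Nat.cast_ofNat]
  ring

lemma le_integral_rpow_div_add_mul_sq {v y b : ℝ} (hv : 1 ≤ v) (hy : y ^ 2 ≤ 1)
    (hb1 : 1 ≤ b) (hb : b ^ 2 ≤ v + 2) :
    (b - 1) * (8 - b - b ^ 2) / 6 ≤
      ∫ x in (1 : ℝ)..b, ((v + y ^ 2) / (v + y ^ 2 * x ^ 2)) ^ ((v + 1) / 2) := by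
  have hden : ∀ x : ℝ, 0 < v + y ^ 2 * x ^ 2 := fun x => by positivity
  rw [← integral_three_halves_sub_sq]
  have hcont : Continuous fun x : ℝ => ((v + y ^ 2) / (v + y ^ 2 * x ^ 2)) ^ ((v + 1) / 2) :=
    (continuous_const.div (by fun_prop) fun x => (hden x).ne').rpow_const
      fun _ => Or.inr (by linarith)
  have hpoly : Continuous fun x : ℝ => 3 / 2 - x ^ 2 / 2 := by fun_prop
  refine integral_mono_on hb1 (hpoly.intervalIntegrable _ _) (hcont.intervalIntegrable _ _)
    fun x ⟨hx1, hxb⟩ => ?_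
  exact three_halves_sub_sq_le_rpow hv hy (by nlinarith) (by nlinarith)

lemma one_lt_mul_of_mul_sq_sub_one_eq {v b : ℝ} (hb1 : 1 < b) (hb3 : b ^ 2 ≤ 3)
    (hvb : v * (b ^ 2 - 1) = 2 * b ^ 2) :
    1 < v * ((b - 1) * (8 - b - b ^ 2) / 6) := by
  have hpoly : 3 * (b + 1) < b ^ 2 * (8 - b - b ^ 2) := by
    have : 0 < (b - 1) * (3 * (b - 1) + b * (3 - b ^ 2) + 2 * (3 - b ^ 2)) :=
      mul_pos (by linarith) (by nlinarith)
    linarith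
  have h : v * ((b - 1) * (8 - b - b ^ 2) / 6) * (3 * (b + 1)) = b ^ 2 * (8 - b - b ^ 2) := by
    linear_combination (8 - b - b ^ 2) / 2 * hvb
  have hpos : 0 < 3 * (b + 1) := by linarith
  rw [eq_div_of_mul_eq hpos.ne' h, one_lt_div hpos]
  exact hpoly

theorem stmt_8 (y v : ℝ) (hy0 : 0 < y) (hy1 : y ≤ 1) (hv : 3 ≤ v) :
    1 < G v y := by
  set b := √(v / (v - 2))
  have hbsq : b ^ 2 = v / (v - 2) := sq_sqrt (div_nonneg (by linarith) (by linarith))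
  have hb1 : 1 < b := lt_sqrt_of_sq_lt (by rw [one_pow, one_lt_div (by linarith)]; linarith)
  have hb3 : b ^ 2 ≤ 3 := by rw [hbsq, div_le_iff₀ (by linarith)]; linarith
  have hvb : v * (b ^ 2 - 1) = 2 * b ^ 2 := by
    rw [hbsq]; field_simp [(by linarith : v - 2 ≠ 0)]; ring
  calc 1 < v * ((b - 1) * (8 - b - b ^ 2) / 6) := one_lt_mul_of_mul_sq_sub_one_eq hb1 hb3 hvb
    _ ≤ G v y := mul_le_mul_of_nonneg_left
        (le_integral_rpow_div_add_mul_sq (by linarith) (by nlinarith) hb1.le (by linarith))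
        (by linarith)
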